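/- Let H be a Hopf algebra and A a partial H-module algebra. Let A#H denote A⊗H with product (a⊗h)(b⊗k) = Σ a(h₍₁₎·b)⊗h₍₂₎k, and let A#̲H := (A⊗H)(1_A⊗1_H) be the right ideal generated by 1_A⊗1_H. Then 1_A⊗1_H is a two-sided unit of A#̲H (the element a#h := Σ a(h₍₁₎·1_A)⊗h₍₂₎ satisfies (1_A⊗1_H)(a#h) = a#h = (a#h)(1_A⊗1_H)), so A#̲H is a unital algebra. -/

import Mathlib

open TensorProduct

/-- For fixed a : A and h : H, the bilinear map (b, g) ↦ Σ a(h₁·b) ⊗ h₂g with values in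
A ⊗ H. -/
noncomputable def smashAux (k : Type*) {H A : Type*} [Field k] [Ring H] [HopfAlgebra k H]
    [Ring A] [Algebra k A] (act : H →ₗ[k] A →ₗ[k] A) (a : A) (h : H) :
    A →ₗ[k] H →ₗ[k] A ⊗[k] H :=
  LinearMap.mk₂ k
    (fun b g => TensorProduct.map (LinearMap.mul k A a ∘ₗ act.flip b)
      ((LinearMap.mul k H).flip g) (Coalgebra.comul (R := k) h))
    (by
      intro b b' g
      simp only [map_add, LinearMap.comp_add, TensorProduct.map_add_left,
        LinearMap.add_apply])
    (by
      intro c b g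
      simp only [map_smul, LinearMap.comp_smul, TensorProduct.map_smul_left,
        LinearMap.smul_apply])
    (by
      intro b g g'
      simp only [map_add, TensorProduct.map_add_right, LinearMap.add_apply])
    (by
      intro c b g
      simp only [map_smul, TensorProduct.map_smul_right, LinearMap.smul_apply])

/-- The smash product multiplication on A ⊗ H determined by a partial H-action on A:
(a ⊗ h)(b ⊗ g) = Σ a(h₁·b) ⊗ h₂g, as a bilinear map. -/
noncomputable def smashMul (k : Type*) {H A : Type*} [Field k] [Ring H] [HopfAlgebra k H]
    [Ring A] [Algebra k A] (act : H →ₗ[k] A →ₗ[k] A) :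
    A ⊗[k] H →ₗ[k] A ⊗[k] H →ₗ[k] A ⊗[k] H :=
  TensorProduct.lift
    (LinearMap.mk₂ k (fun a h => TensorProduct.lift (smashAux k act a h))
      (by
        intro a a' h
        apply TensorProduct.ext'
        intro b g
        simp [smashAux, LinearMap.add_comp, TensorProduct.map_add_left, map_add])
      (by
        intro c a h
        apply TensorProduct.ext'
        intro b g
        simp [smashAux, LinearMap.smul_comp, TensorProduct.map_smul_left, map_smul])
      (by
        intro a h h'
        apply TensorProduct.ext'
        intro b g
        simp [smashAux, map_add])
      (by
        intro c a h
        apply TensorProduct.ext'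
        intro b g
        simp [smashAux, map_smul]))

/-- The "Sweedler sum" Σ f(h₍₁₎) * g(h₍₂₎). -/
noncomputable def sw (k : Type*) {H A : Type*} [Field k]
    [AddCommGroup H] [Module k H] [Ring A] [Algebra k A]
    (f g : H →ₗ[k] A) : H ⊗[k] H →ₗ[k] A :=
  TensorProduct.lift ((LinearMap.mul k A).compl₁₂ f g)


lemma sw_tmul {k H A : Type*} [Field k] [AddCommGroup H] [Module k H]
    [Ring A] [Algebra k A] (f g : H →ₗ[k] A) (u v : H) :
    sw k f g (u ⊗ₜ[k] v) = f u * g v := by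
  simp [sw]

lemma smashMul_tmul {k H A : Type*} [Field k] [Ring H] [HopfAlgebra k H]
    [Ring A] [Algebra k A] (act : H →ₗ[k] A →ₗ[k] A)
    (a b : A) (h g : H) {ι : Type*} (r : Coalgebra.Repr k h ι) :
    smashMul k act (a ⊗ₜ[k] h) (b ⊗ₜ[k] g)
      = ∑ i ∈ r.index, (a * act (r.left i) b) ⊗ₜ[k] (r.right i * g) := by
  rw [smashMul]
  simp only [lift.tmul, LinearMap.mk₂_apply, smashAux, ← r.eq, map_sum, TensorProduct.map_tmul,
    LinearMap.comp_apply, LinearMap.flip_apply, LinearMap.mul_apply']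

lemma smashMul_one_left {k H A : Type*} [Field k] [Ring H] [HopfAlgebra k H]
    [Ring A] [Algebra k A] (act : H →ₗ[k] A →ₗ[k] A)
    (h1 : ∀ a : A, act 1 a = a) (y : A ⊗[k] H) :
    smashMul k act ((1 : A) ⊗ₜ[k] (1 : H)) y = y := by
  induction y using TensorProduct.induction_on with
  | zero => simp
  | tmul b g =>
      rw [smashMul]
      simp only [lift.tmul, LinearMap.mk₂_apply, smashAux]
      rw [Bialgebra.comul_one, Algebra.TensorProduct.one_def]
      simp [h1]
  | add u v hu hv => simp [map_add, hu, hv]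

/-- 1_A ⊗ 1_H is a two-sided unit of the partial smash product
A#̲H = (A⊗H)(1_A⊗1_H): for every x, the element y = x(1⊗1) satisfies
(1⊗1)y = y = y(1⊗1). -/
theorem stmt_16 {k H A : Type*} [Field k] [Ring H] [HopfAlgebra k H]
    [Ring A] [Algebra k A]
    (act : H →ₗ[k] A →ₗ[k] A)
    (h1 : ∀ a : A, act 1 a = a)
    (h2 : ∀ (h : H) (a b : A),
      act h (a * b) = sw k (act.flip a) (act.flip b) (Coalgebra.comul (R := k) h))
    (h3 : ∀ (h g : H) (a : A),
      act h (act g a) = sw k (act.flip 1) (act.flip a ∘ₗ LinearMap.mulRight k g)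
        (Coalgebra.comul (R := k) h)) :
    ∀ x : A ⊗[k] H,
      smashMul k act ((1 : A) ⊗ₜ[k] (1 : H)) (smashMul k act x ((1 : A) ⊗ₜ[k] (1 : H)))
        = smashMul k act x ((1 : A) ⊗ₜ[k] (1 : H)) ∧
      smashMul k act (smashMul k act x ((1 : A) ⊗ₜ[k] (1 : H))) ((1 : A) ⊗ₜ[k] (1 : H))
        = smashMul k act x ((1 : A) ⊗ₜ[k] (1 : H)) := by
  intro x
  refine ⟨smashMul_one_left act h1 _, ?_⟩
  induction x using TensorProduct.induction_on with
  | zero => simp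
  | add u v hu hv =>
      simp only [map_add, LinearMap.add_apply] at hu hv ⊢
      rw [hu, hv]
  | tmul a h =>
      set r := Coalgebra.Repr.arbitrary k h with hr
      set r1 : ∀ i : r.ι, Coalgebra.Repr k (r.left i) (H × H) :=
        fun i => Coalgebra.Repr.arbitrary k (r.left i) with hr1
      set r2 : ∀ i : r.ι, Coalgebra.Repr k (r.right i) (H × H) :=
        fun i => Coalgebra.Repr.arbitrary k (r.right i) with hr2
      rw [smashMul_tmul act a 1 h 1 r]
      simp only [mul_one]
      have expand : smashMul k act
            (∑ i ∈ r.index, (a * act (r.left i) 1) ⊗ₜ[k] (r.right i))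
            ((1 : A) ⊗ₜ[k] (1 : H))
          = ∑ i ∈ r.index, ∑ j ∈ (r2 i).index,
              (a * act (r.left i) 1 * act ((r2 i).left j) 1) ⊗ₜ[k] ((r2 i).right j) := by
        rw [map_sum, LinearMap.sum_apply]
        refine Finset.sum_congr rfl fun i _ => ?_
        rw [smashMul_tmul act _ 1 _ 1 (r2 i)]
        simp only [mul_one]
      rw [expand]
      have Id := Coalgebra.sum_tmul_tmul_eq r r1 r2
      set F : H ⊗[k] (H ⊗[k] H) →ₗ[k] A ⊗[k] H :=
        (TensorProduct.map ((LinearMap.mulLeft k a) ∘ₗ sw k (act.flip 1) (act.flip 1))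
          LinearMap.id) ∘ₗ (TensorProduct.assoc k H H H).symm.toLinearMap with hF
      have hFt : ∀ u v w : H, F (u ⊗ₜ[k] (v ⊗ₜ[k] w)) = (a * (act u 1 * act v 1)) ⊗ₜ[k] w := by
        intro u v w
        simp [hF, sw_tmul]
      have Id2 := congrArg F Id
      simp only [map_sum, hFt, ← mul_assoc] at Id2
      rw [← Id2]
      refine Finset.sum_congr rfl fun i _ => ?_
      rw [← TensorProduct.sum_tmul]
      congr 1
      have key := h2 (r.left i) 1 1
      rw [mul_one] at key
      rw [key, ← (r1 i).eq, map_sum]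
      simp only [sw_tmul, LinearMap.flip_apply, Finset.mul_sum, mul_assoc]
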